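/- Let S be a topological inverse semigroup (multiplication and inversion continuous). Then S is Hausdorff if and only if the natural partial order ≤ is a closed subset of S × S. -/
import Mathlib


/-- An inverse semigroup. -/
class InverseSemigroup (S : Type*) extends Semigroup S, Inv S where
  mul_inv_mul : ∀ a : S, a * a⁻¹ * a = a
  inv_mul_inv : ∀ a : S, a⁻¹ * a * a⁻¹ = a⁻¹
  inv_unique : ∀ a b : S, a * b * a = a → b * a * b = b → b = a⁻¹

/-- The natural partial order on an inverse semigroup:
`s ≤ t` iff `s = e * t` for some idempotent `e`. -/
def natLe {S : Type*} [InverseSemigroup S] (s t : S) : Prop :=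
  ∃ e : S, e * e = e ∧ s = e * t

section Aux
variable {S : Type*} [InverseSemigroup S]

local notation "miv" => InverseSemigroup.mul_inv_mul
local notation "imi" => InverseSemigroup.inv_mul_inv

lemma IS.cancel {e : S} (he : e * e = e) (x : S) : e * (e * x) = e * x := by
  rw [← mul_assoc, he]

lemma IS.comm_lift {a b : S} (h : a * b = b * a) (x : S) :
    a * (b * x) = b * (a * x) := by
  rw [← mul_assoc, h, mul_assoc]

lemma IS.inv_inv (a : S) : a⁻¹⁻¹ = a :=
  (InverseSemigroup.inv_unique a⁻¹ a (imi a) (miv a)).symm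

lemma IS.idem_inv {e : S} (he : e * e = e) : e⁻¹ = e := by
  have h : e * e * e = e := by rw [he, he]
  exact (InverseSemigroup.inv_unique e e h h).symm

/-- inverse of product of idempotents is idempotent -/
lemma IS.key {e f : S} (he : e * e = e) (hf : f * f = f) :
    (e * f)⁻¹ * (e * f)⁻¹ = (e * f)⁻¹ := by
  set a := e * f with ha
  set b := a⁻¹ with hb
  have h1 : a * (f * b * e) * a = a := by
    calc a * (f * b * e) * a = e * (f * f) * b * (e * e) * f := by
          simp only [ha, mul_assoc]
      _ = a * b * a := by rw [hf, he]; simp only [ha, mul_assoc]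
      _ = a := miv a
  have h2 : (f * b * e) * a * (f * b * e) = f * b * e := by
    calc (f * b * e) * a * (f * b * e)
        = f * b * ((e * e) * (f * f)) * b * e := by
          simp only [ha, mul_assoc]
      _ = f * (b * a * b) * e := by rw [he, hf]; simp only [ha, mul_assoc]
      _ = f * b * e := by rw [imi a]
  have hbe : b = f * b * e := (InverseSemigroup.inv_unique a (f * b * e) h1 h2).symm
  calc b * b = (f * b * e) * (f * b * e) := by rw [← hbe]
    _ = f * (b * a * b) * e := by simp only [ha, mul_assoc]
    _ = f * b * e := by rw [imi a]
    _ = b := hbe.symm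

/-- product of idempotents is idempotent -/
lemma IS.idem_mul {e f : S} (he : e * e = e) (hf : f * f = f) :
    (e * f) * (e * f) = e * f := by
  have hb := IS.key he hf
  have h : (e * f)⁻¹⁻¹ = (e * f)⁻¹ := IS.idem_inv hb
  rw [IS.inv_inv] at h
  rw [h]; exact hb

/-- idempotents commute -/
lemma IS.idem_comm {e f : S} (he : e * e = e) (hf : f * f = f) :
    e * f = f * e := by
  have hef := IS.idem_mul he hf
  have hfe := IS.idem_mul hf he
  have h1 : (e * f) * (f * e) * (e * f) = e * f := by
    calc (e * f) * (f * e) * (e * f) = e * (f * f) * (e * e) * f := by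
          simp only [mul_assoc]
      _ = (e * f) * (e * f) := by rw [hf, he]; simp only [mul_assoc]
      _ = e * f := hef
  have h2 : (f * e) * (e * f) * (f * e) = f * e := by
    calc (f * e) * (e * f) * (f * e) = f * (e * e) * (f * f) * e := by
          simp only [mul_assoc]
      _ = (f * e) * (f * e) := by rw [he, hf]; simp only [mul_assoc]
      _ = f * e := hfe
  have h : f * e = (e * f)⁻¹ := InverseSemigroup.inv_unique _ _ h1 h2
  rw [h, IS.idem_inv hef]

lemma IS.mul_inv_idem (s : S) : (s * s⁻¹) * (s * s⁻¹) = s * s⁻¹ := by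
  calc (s * s⁻¹) * (s * s⁻¹) = (s * s⁻¹ * s) * s⁻¹ := by simp only [mul_assoc]
    _ = s * s⁻¹ := by rw [miv]

/-- inverse of a product `e * t` with `e` idempotent -/
lemma IS.inv_idem_mul {e : S} (he : e * e = e) (t : S) :
    (e * t)⁻¹ = t⁻¹ * e := by
  have hc : (t * t⁻¹) * e = e * (t * t⁻¹) := IS.idem_comm (IS.mul_inv_idem t) he
  have h1 : (e * t) * (t⁻¹ * e) * (e * t) = e * t := by
    calc (e * t) * (t⁻¹ * e) * (e * t)
        = e * (t * t⁻¹) * (e * (e * t)) := by simp only [mul_assoc]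
      _ = e * (t * t⁻¹) * (e * t) := by rw [IS.cancel he t]
      _ = e * ((t * t⁻¹) * (e * t)) := by rw [mul_assoc]
      _ = e * (e * ((t * t⁻¹) * t)) := by rw [IS.comm_lift hc t]
      _ = e * ((t * t⁻¹) * t) := IS.cancel he _
      _ = e * t := by rw [miv]
  have h2 : (t⁻¹ * e) * (e * t) * (t⁻¹ * e) = t⁻¹ * e := by
    calc (t⁻¹ * e) * (e * t) * (t⁻¹ * e)
        = t⁻¹ * (e * (e * (t * (t⁻¹ * e)))) := by simp only [mul_assoc]
      _ = t⁻¹ * (e * (t * (t⁻¹ * e))) := by rw [IS.cancel he]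
      _ = t⁻¹ * (e * ((t * t⁻¹) * e)) := by rw [← mul_assoc t t⁻¹ e]
      _ = t⁻¹ * (e * (e * (t * t⁻¹))) := by rw [hc]
      _ = t⁻¹ * (e * (t * t⁻¹)) := by rw [IS.cancel he]
      _ = t⁻¹ * ((t * t⁻¹) * e) := by rw [← hc]
      _ = (t⁻¹ * t * t⁻¹) * e := by simp only [mul_assoc]
      _ = t⁻¹ * e := by rw [imi]
  exact (InverseSemigroup.inv_unique _ _ h1 h2).symm

/-- characterization of the natural order -/
lemma natLe_iff {s t : S} : natLe s t ↔ s * s⁻¹ * t = s := by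
  constructor
  · rintro ⟨e, he, rfl⟩
    have hc : (t * t⁻¹) * e = e * (t * t⁻¹) := IS.idem_comm (IS.mul_inv_idem t) he
    rw [IS.inv_idem_mul he]
    calc (e * t) * (t⁻¹ * e) * t
        = e * ((t * t⁻¹) * (e * t)) := by simp only [mul_assoc]
      _ = e * (e * ((t * t⁻¹) * t)) := by rw [IS.comm_lift hc t]
      _ = e * ((t * t⁻¹) * t) := IS.cancel he _
      _ = e * t := by rw [miv]
  · intro h
    exact ⟨s * s⁻¹, IS.mul_inv_idem s, h.symm⟩

lemma natLe_refl (s : S) : natLe s s :=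
  natLe_iff.mpr (miv s)

lemma natLe_antisymm {s t : S} (h1 : natLe s t) (h2 : natLe t s) : s = t := by
  rw [natLe_iff] at h1 h2
  have hc : t * t⁻¹ * (s * s⁻¹) = s * s⁻¹ * (t * t⁻¹) :=
    IS.idem_comm (IS.mul_inv_idem t) (IS.mul_inv_idem s)
  calc s = s * s⁻¹ * t := h1.symm
    _ = s * s⁻¹ * (t * t⁻¹ * s) := by rw [h2]
    _ = (s * s⁻¹) * (t * t⁻¹) * s := by simp only [mul_assoc]
    _ = (t * t⁻¹) * (s * s⁻¹) * s := by rw [← hc]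
    _ = t * t⁻¹ * (s * s⁻¹ * s) := by simp only [mul_assoc]
    _ = t * t⁻¹ * s := by rw [miv]
    _ = t := h2

end Aux

/-- a topological inverse semigroup is Hausdorff iff its natural
partial order is closed in `S × S`. -/
theorem stmt12 {S : Type*} [InverseSemigroup S] [TopologicalSpace S]
    (hmul : Continuous fun p : S × S => p.1 * p.2)
    (hinv : Continuous fun s : S => s⁻¹) :
    T2Space S ↔ IsClosed {p : S × S | natLe p.1 p.2} := by
  have hset : {p : S × S | natLe p.1 p.2} =
      {p : S × S | p.1 * p.1⁻¹ * p.2 = p.1} := by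
    ext p; exact natLe_iff
  have h1 : Continuous fun p : S × S => p.1 * p.1⁻¹ :=
    hmul.comp (continuous_fst.prodMk (hinv.comp continuous_fst))
  have h2 : Continuous fun p : S × S => p.1 * p.1⁻¹ * p.2 :=
    hmul.comp (h1.prodMk continuous_snd)
  constructor
  · intro _
    rw [hset]
    exact isClosed_eq h2 continuous_fst
  · intro hcl
    rw [t2_iff_isClosed_diagonal]
    have hswap : IsClosed {p : S × S | natLe p.2 p.1} :=
      hcl.preimage (continuous_snd.prodMk continuous_fst)
    have hdiag : Set.diagonal S =
        {p : S × S | natLe p.1 p.2} ∩ {p : S × S | natLe p.2 p.1} := by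
      ext ⟨a, b⟩
      simp only [Set.mem_diagonal_iff, Set.mem_inter_iff, Set.mem_setOf_eq]
      constructor
      · rintro rfl; exact ⟨natLe_refl a, natLe_refl a⟩
      · rintro ⟨hab, hba⟩; exact natLe_antisymm hab hba
    rw [hdiag]
    exact hcl.inter hswap
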